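/- arXiv:quant-ph/0108112 — 4 statements merged into one kernel-verified Lean document; each statement's English description precedes it below -/
import Mathlib

section
/- Let H be a positive self-adjoint bounded operator on a Hilbert space and let z₁, z₂ be complex numbers with positive real part such that z₁ + z₂H is invertible. Then the operator H(z₁ + z₂H)⁻¹ has non-negative real part, i.e. (1/2)(H(z₁+z₂H)⁻¹ + (H(z₁+z₂H)⁻¹)*) is a positive operator. -/
open ContinuousLinearMap

local notation "⟪" x ", " y "⟫" => @inner ℂ _ _ x y

/-- If `H` is a positive self-adjoint bounded operator and `z₁, z₂` have positive real part
with `z₁ + z₂ H` invertible (inverse `T`), then `H (z₁ + z₂ H)⁻¹` has non-negative real part. -/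
theorem stmt0 {E : Type*} [NormedAddCommGroup E] [InnerProductSpace ℂ E] [CompleteSpace E]
    (H T : E →L[ℂ] E) (hH : H.IsPositive) (z₁ z₂ : ℂ)
    (hz₁ : 0 < z₁.re) (hz₂ : 0 < z₂.re)
    (hT₁ : (z₁ • (1 : E →L[ℂ] E) + z₂ • H) * T = 1)
    (hT₂ : T * (z₁ • (1 : E →L[ℂ] E) + z₂ • H) = 1) :
    ((2 : ℂ)⁻¹ • (H * T + adjoint (H * T))).IsPositive := by
  constructor
  · have h1 : IsSelfAdjoint (H * T + adjoint (H * T)) := by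
      rw [ContinuousLinearMap.isSelfAdjoint_iff']
      simp [map_add, adjoint_adjoint, add_comm]
    have hr : IsSelfAdjoint ((2 : ℂ)⁻¹) := by
      rw [IsSelfAdjoint]; simp
    exact isSelfAdjoint_iff_isSymmetric.mp (hr.smul h1)
  · intro x
    have hx : z₁ • (T x) + z₂ • H (T x) = x := by
      have := congrArg (fun S => S x) hT₁
      simpa [mul_apply] using this
    rw [reApplyInnerSelf_apply]
    set y := T x with hy
    have hA : RCLike.re (⟪((2 : ℂ)⁻¹ • (H * T + adjoint (H * T))) x, x⟫)
        = RCLike.re ⟪H y, x⟫ := by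
      simp only [add_apply, smul_apply, inner_smul_left, inner_add_left, mul_apply]
      rw [adjoint_inner_left]
      rw [show ⟪x, (H * T) x⟫ = starRingEnd ℂ ⟪(H * T) x, x⟫ from (inner_conj_symm _ _).symm]
      simp only [mul_apply, Complex.mul_re, Complex.add_re, Complex.add_im, Complex.conj_re,
        Complex.conj_im, RCLike.re_to_complex, map_inv₀, Complex.inv_re, Complex.inv_im]
      norm_num
      ring
    rw [hA, ← hx, inner_add_right, inner_smul_right, inner_smul_right]
    have hsym := (isSelfAdjoint_iff_isSymmetric.mp hH.isSelfAdjoint)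
    have h1 : (⟪H y, y⟫).im = 0 := by
      have := hsym.conj_inner_sym y y
      have h2 : starRingEnd ℂ ⟪H y, y⟫ = ⟪H y, y⟫ := by
        rw [inner_conj_symm]; exact (hsym y y).symm
      exact Complex.conj_eq_iff_im.mp h2
    have h2 : 0 ≤ (⟪H y, y⟫).re := (Complex.le_def.mp (hH.inner_nonneg_left y)).1
    have h3 : ⟪H y, H y⟫ = (‖H y‖ : ℂ) ^ 2 := by
      rw [inner_self_eq_norm_sq_to_K]; norm_cast
    simp only [RCLike.re_to_complex, Complex.add_re, Complex.mul_re, h1, h3]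
    have : (((‖H y‖:ℂ))^2).re = ‖H y‖^2 := by norm_cast
    rw [this, show (((‖H y‖:ℂ))^2).im = 0 by norm_cast]
    have := sq_nonneg ‖H y‖
    nlinarith [mul_nonneg hz₁.le h2, mul_nonneg hz₂.le (sq_nonneg ‖H y‖)]
end

section
/- For any λ > 0 and any Schwartz test function φ on ℝ, the integral ∫ℝ (e^{ixs/λ²}/λ²)·φ(x) dx, integrated against a test function ψ(s) over s ∈ ℝ, converges as λ → 0 to 2π·φ(0)·ψ(0). That is, (1/λ²)e^{i x s/λ²} → 2π δ(x)δ(s) in the sense of distributions on ℝ². -/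
open MeasureTheory Filter FourierTransform Real

/-- `(1/λ²) e^{ixs/λ²} → 2π δ(x) δ(s)` in the sense of distributions on `ℝ²`:
for Schwartz test functions `φ, ψ`, the pairing converges to `2π φ(0) ψ(0)` as `λ → 0⁺`. -/
theorem stmt3 (φ ψ : SchwartzMap ℝ ℂ) :
    Tendsto (fun lam : ℝ => ∫ x : ℝ, ∫ s : ℝ,
        ((lam : ℂ)^2)⁻¹ * Complex.exp (Complex.I * x * s / (lam : ℂ)^2) * φ x * ψ s)
      (nhdsWithin 0 (Set.Ioi 0))
      (nhds (((2 * Real.pi : ℝ) : ℂ) * φ 0 * ψ 0)) := by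
  set G : SchwartzMap ℝ ℂ := SchwartzMap.fourierTransformCLM ℂ ψ with hG
  have hGfun : ∀ w, G w = 𝓕 (fun s => ψ s) w := fun w => rfl
  -- value of ∫ G(-u)
  have hI : (∫ u : ℝ, G (-u)) = ψ 0 := by
    have h1 : (∫ u : ℝ, G (-u)) = ∫ u : ℝ, G u := by
      exact integral_neg_eq_self _ _
    rw [h1]
    have h2 : (∫ u : ℝ, G u) = 𝓕⁻ (𝓕 (fun s => ψ s)) 0 := by
      rw [Real.fourierInv_eq]
      simp [hGfun]
    rw [h2]
    have h3 : Integrable (𝓕 (fun s => ψ s)) := by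
      have := G.integrable (μ := volume)
      rwa [show (⇑G) = 𝓕 (fun s => ψ s) from funext hGfun] at this
    rw [ψ.continuous.fourierInv_fourier_eq ψ.integrable h3]
  -- main pointwise equality for lam > 0
  have key : ∀ lam : ℝ, lam ∈ Set.Ioi (0:ℝ) →
      (∫ x : ℝ, ∫ s : ℝ,
        ((lam : ℂ)^2)⁻¹ * Complex.exp (Complex.I * x * s / (lam : ℂ)^2) * φ x * ψ s)
      = ∫ u : ℝ, ((2 * π : ℝ) : ℂ) * φ (2 * π * lam^2 * u) * G (-u) := by
    intro lam hlam
    simp only [Set.mem_Ioi] at hlam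
    have hlam2 : (0:ℝ) < lam ^ 2 := by positivity
    have ha : (0:ℝ) < 2 * π * lam ^ 2 := by positivity
    have hinner : ∀ x : ℝ,
        (∫ s : ℝ, ((lam : ℂ)^2)⁻¹ * Complex.exp (Complex.I * x * s / (lam : ℂ)^2) * φ x * ψ s)
        = ((lam : ℂ)^2)⁻¹ * φ x * G (-(x / (2 * π * lam^2))) := by
      intro x
      have : (∫ s : ℝ, ((lam : ℂ)^2)⁻¹ * Complex.exp (Complex.I * x * s / (lam : ℂ)^2) * φ x * ψ s)
          = ((lam : ℂ)^2)⁻¹ * φ x *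
            ∫ s : ℝ, Complex.exp (Complex.I * x * s / (lam : ℂ)^2) * ψ s := by
        rw [← integral_const_mul]
        congr 1; ext s; ring
      rw [this]
      congr 1
      rw [hGfun, Real.fourier_eq']
      congr 1
      ext s
      rw [smul_eq_mul]
      congr 2
      have h2 : ((lam:ℂ)^2) ≠ 0 := pow_ne_zero _ (by exact_mod_cast hlam.ne')
      have hπ : (π:ℂ) ≠ 0 := by exact_mod_cast Real.pi_ne_zero
      simp only [RCLike.inner_apply, conj_trivial]
      push_cast
      field_simp
    simp only [hinner]
    -- change of variables x = (2π lam²) u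
    have := MeasureTheory.Measure.integral_comp_mul_left
      (fun x : ℝ => ((lam : ℂ)^2)⁻¹ * φ x * G (-(x / (2 * π * lam^2)))) (2 * π * lam^2)
    rw [abs_of_pos (inv_pos.mpr ha)] at this
    have h4 : (∫ x : ℝ, ((lam : ℂ)^2)⁻¹ * φ x * G (-(x / (2 * π * lam^2))))
        = (2 * π * lam^2) • ∫ u : ℝ, ((lam : ℂ)^2)⁻¹ * φ (2 * π * lam^2 * u)
            * G (-(2 * π * lam^2 * u / (2 * π * lam^2))) := by
      rw [this, smul_smul, mul_inv_cancel₀ ha.ne', one_smul]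
    rw [h4, ← integral_smul]
    congr 1; ext u
    have h5 : 2 * π * lam^2 * u / (2 * π * lam^2) = u := by field_simp
    rw [h5]
    rw [Complex.real_smul]
    have h6 : ((lam:ℂ)^2) ≠ 0 := pow_ne_zero _ (by exact_mod_cast hlam.ne')
    have h7 : (lam:ℂ) ≠ 0 := by exact_mod_cast hlam.ne'
    push_cast
    field_simp
  -- now the limit
  have heq : ∀ᶠ (lam : ℝ) in nhdsWithin (0:ℝ) (Set.Ioi 0),
      (∫ x : ℝ, ∫ s : ℝ,
        ((lam : ℂ)^2)⁻¹ * Complex.exp (Complex.I * x * s / (lam : ℂ)^2) * φ x * ψ s)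
      = ∫ u : ℝ, ((2 * π : ℝ) : ℂ) * φ (2 * π * lam^2 * u) * G (-u) :=
    eventually_mem_nhdsWithin.mono key
  rw [tendsto_congr' heq]
  have hlimval : (((2 * Real.pi : ℝ) : ℂ) * φ 0 * ψ 0)
      = ∫ u : ℝ, ((2 * π : ℝ) : ℂ) * φ 0 * G (-u) := by
    rw [integral_const_mul, hI]
  rw [hlimval]
  set C : ℝ := SchwartzMap.seminorm ℝ 0 0 φ with hC
  apply tendsto_integral_filter_of_dominated_convergence
    (fun u => (2 * π) * C * ‖G (-u)‖)
  · filter_upwards with lam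
    apply Continuous.aestronglyMeasurable
    exact (continuous_const.mul (φ.continuous.comp (by continuity))).mul
      (G.continuous.comp continuous_neg)
  · filter_upwards with lam
    filter_upwards with u
    rw [norm_mul, norm_mul]
    have h1 : ‖(((2 * π : ℝ)) : ℂ)‖ = 2 * π := by
      rw [Complex.norm_real, Real.norm_eq_abs, abs_of_pos (by positivity)]
    rw [h1]
    have h2 : ‖φ (2 * π * lam^2 * u)‖ ≤ C := φ.norm_le_seminorm ℝ _
    have : (0:ℝ) ≤ 2 * π := by positivity
    gcongr
  · exact ((G.integrable.comp_neg).norm.const_mul _)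
  · filter_upwards with u
    have h1 : Tendsto (fun lam : ℝ => 2 * π * lam^2 * u) (nhdsWithin 0 (Set.Ioi 0)) (nhds 0) := by
      have : Continuous (fun lam : ℝ => 2 * π * lam^2 * u) := by continuity
      have := this.tendsto 0
      simpa using this.mono_left nhdsWithin_le_nhds
    have h2 : Tendsto (fun lam : ℝ => φ (2 * π * lam^2 * u)) (nhdsWithin 0 (Set.Ioi 0))
        (nhds (φ 0)) := (φ.continuous.tendsto 0).comp h1
    exact (h2.const_mul _).mul_const _
end

section
/- Let S_t = e^{itH} be the unitary group generated by a self-adjoint operator H on a Hilbert space, and suppose f, g are vectors with ∫ℝ |⟨f, S_t g⟩| dt < ∞ for all f, g in a subspace K containing them. Then the sesquilinear form (f|g) := ∫ℝ ⟨f, S_t g⟩ dt defines a pre-inner product on K: it is conjugate-symmetric, linear in the second argument, and (f|f) ≥ 0 for all f ∈ K. -/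
open MeasureTheory NormedSpace Set Filter

namespace Stmt4Aux

def wgt (T u : ℝ) : ℝ := max (min T (T - u) - max 0 (-u)) 0

lemma fubini_step (φ : ℝ → ℂ) (hφcont : Continuous φ) (hφint : Integrable φ) (T : ℝ) :
    (∫ s in Ioc (0:ℝ) T, ∫ t in Ioc (0:ℝ) T, φ (t - s)) = ∫ u : ℝ, wgt T u • φ u := by
  -- the two-variable integrand
  set G : ℝ × ℝ → ℂ :=
    fun p => if p.1 ∈ Ioc (0:ℝ) T ∧ p.2 ∈ Ioc (-p.1) (T - p.1) then φ p.2 else 0 with hG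
  have hWmeas : MeasurableSet {p : ℝ × ℝ | p.1 ∈ Ioc (0:ℝ) T ∧ p.2 ∈ Ioc (-p.1) (T - p.1)} := by
    have : {p : ℝ × ℝ | p.1 ∈ Ioc (0:ℝ) T ∧ p.2 ∈ Ioc (-p.1) (T - p.1)}
        = ({p : ℝ × ℝ | 0 < p.1} ∩ {p | p.1 ≤ T}) ∩
          ({p : ℝ × ℝ | -p.1 < p.2} ∩ {p | p.2 ≤ T - p.1}) := by
      ext p; simp [Set.mem_Ioc, and_assoc]
    rw [this]
    exact (((measurableSet_lt measurable_const measurable_fst).inter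
      (measurableSet_le measurable_fst measurable_const)).inter
      (((measurableSet_lt measurable_fst.neg measurable_snd)).inter
      (measurableSet_le measurable_snd (measurable_const.sub measurable_fst))))
  have hGeq : G = Set.indicator {p : ℝ × ℝ | p.1 ∈ Ioc (0:ℝ) T ∧ p.2 ∈ Ioc (-p.1) (T - p.1)}
      (fun p => φ p.2) := by
    funext p; by_cases h : p.1 ∈ Ioc (0:ℝ) T ∧ p.2 ∈ Ioc (-p.1) (T - p.1) <;>
      simp [hG, h, Set.indicator_apply]
  have hGmeas : AEStronglyMeasurable G (volume : Measure (ℝ × ℝ)) := by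
    rw [hGeq]
    exact ((hφcont.comp continuous_snd).stronglyMeasurable.indicator hWmeas).aestronglyMeasurable
  have hdom : Integrable (fun p : ℝ × ℝ =>
      ((Ioc (0:ℝ) T).indicator (fun _ => (1:ℝ)) p.1) * ‖φ p.2‖) (volume : Measure (ℝ × ℝ)) := by
    exact Integrable.mul_prod
      ((integrableOn_const (C := (1:ℝ)) measure_Ioc_lt_top.ne).integrable_indicator measurableSet_Ioc)
      hφint.norm
  have hGint : Integrable G (volume : Measure (ℝ × ℝ)) := by
    refine hdom.mono hGmeas (Filter.Eventually.of_forall fun p => ?_)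
    by_cases h : p.1 ∈ Ioc (0:ℝ) T ∧ p.2 ∈ Ioc (-p.1) (T - p.1)
    · have hval : G p = φ p.2 := if_pos h
      simp [hval, Set.indicator_of_mem h.1]
    · have hval : G p = 0 := if_neg h
      rw [hval, norm_zero]
      positivity
  -- step 1 : rewrite LHS as iterated integral of G
  have step1 : (∫ s in Ioc (0:ℝ) T, ∫ t in Ioc (0:ℝ) T, φ (t - s))
      = ∫ s : ℝ, ∫ u : ℝ, G (s, u) := by
    rw [← integral_indicator measurableSet_Ioc]
    congr 1; funext s
    by_cases hs : s ∈ Ioc (0:ℝ) T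
    · rw [Set.indicator_of_mem hs]
      -- substitute t = u + s in the inner ℂ integral
      rw [← integral_indicator measurableSet_Ioc,
        ← integral_add_right_eq_self (fun t => (Ioc (0:ℝ) T).indicator (fun t => φ (t - s)) t) s]
      congr 1; funext u
      have hmem : u + s ∈ Ioc (0:ℝ) T ↔ u ∈ Ioc (-s) (T - s) := by
        simp only [Set.mem_Ioc]
        constructor <;> rintro ⟨h1, h2⟩ <;> constructor <;> linarith
      by_cases hu : u ∈ Ioc (-s) (T - s)
      · rw [Set.indicator_of_mem (hmem.2 hu)]
        have : (u + s) - s = u := by ring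
        rw [this]
        exact (if_pos ⟨hs, hu⟩).symm
      · rw [Set.indicator_of_notMem (fun c => hu (hmem.1 c))]
        exact (if_neg (fun c => hu c.2)).symm
    · rw [Set.indicator_of_notMem hs]
      symm
      have h0 : ∀ u : ℝ, G (s, u) = 0 := fun u => if_neg (fun c => hs c.1)
      simp [h0]
  -- step 2 : swap and compute the inner ℂ integral
  rw [step1, integral_integral_swap (by exact hGint)]
  congr 1; funext u
  have hset : {s : ℝ | s ∈ Ioc (0:ℝ) T ∧ u ∈ Ioc (-s) (T - s)}
      = Ioc (0:ℝ) T ∩ Ioc (-u) (T - u) := by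
    ext s
    simp only [Set.mem_setOf_eq, Set.mem_Ioc, Set.mem_inter_iff]
    constructor <;> rintro ⟨⟨h1, h2⟩, h3, h4⟩ <;> exact ⟨⟨h1, h2⟩, by linarith, by linarith⟩
  have : (fun s => G (s, u))
      = Set.indicator (Ioc (0:ℝ) T ∩ Ioc (-u) (T - u)) (fun _ => φ u) := by
    funext s
    by_cases h : s ∈ Ioc (0:ℝ) T ∧ u ∈ Ioc (-s) (T - s)
    · rw [Set.indicator_of_mem (hset ▸ h)]
      exact if_pos h
    · rw [Set.indicator_of_notMem (by rw [← hset]; exact h)]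
      simp only [hG]
      rw [if_neg h]
  rw [this, integral_indicator_const _ (measurableSet_Ioc.inter measurableSet_Ioc)]
  congr 1
  rw [Set.Ioc_inter_Ioc, Real.volume_real_Ioc]
  simp [wgt, max_comm]


variable {E : Type*} [NormedAddCommGroup E] [InnerProductSpace ℂ E] [CompleteSpace E]

lemma S_add (H : E →L[ℂ] E) (s t : ℝ) :
    NormedSpace.exp ((Complex.I * s) • H) * NormedSpace.exp ((Complex.I * t) • H)
      = NormedSpace.exp ((Complex.I * ((s + t : ℝ) : ℂ)) • H) := by
  let +nondep : NormedAlgebra ℚ (E →L[ℂ] E) := .restrictScalars ℚ ℂ _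
  rw [← exp_add_of_commute (Commute.smul_left (Commute.smul_right (Commute.refl H) _) _)]
  congr 1
  rw [← add_smul]
  push_cast
  ring_nf

lemma S_star (H : E →L[ℂ] E) (hH : IsSelfAdjoint H) (t : ℝ) :
    star (NormedSpace.exp ((Complex.I * t) • H)) = NormedSpace.exp ((Complex.I * (-t : ℝ)) • H) := by
  rw [star_exp]
  congr 1
  rw [star_smul, hH.star_eq]
  congr 1
  simp [Complex.ext_iff]

lemma S_cont (H : E →L[ℂ] E) : Continuous fun t : ℝ => NormedSpace.exp ((Complex.I * t) • H) :=
  by let +nondep : NormedAlgebra ℚ (E →L[ℂ] E) := .restrictScalars ℚ ℂ _; exact exp_continuous.comp ((continuous_const.mul Complex.continuous_ofReal).smul continuous_const)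

lemma wgt_nonneg (T u : ℝ) : 0 ≤ wgt T u := le_max_right _ _

lemma wgt_le (T u : ℝ) (hT : 0 ≤ T) : wgt T u ≤ T := by
  refine max_le ?_ hT
  have h1 := min_le_left T (T - u)
  have h2 := le_max_left (0:ℝ) (-u)
  linarith

lemma wgt_eq (T u : ℝ) (h : |u| ≤ T) : wgt T u = T - |u| := by
  rcases le_total 0 u with hu | hu
  · rw [abs_of_nonneg hu] at h ⊢
    have e2 : max 0 (-u) = 0 := max_eq_left (by linarith)
    rw [wgt, min_eq_right (by linarith), e2, sub_zero, max_eq_left (by linarith)]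
  · rw [abs_of_nonpos hu] at h ⊢
    have e2 : max 0 (-u) = -u := max_eq_right (by linarith)
    rw [wgt, min_eq_left (by linarith), e2, sub_neg_eq_add, max_eq_left (by linarith)]

lemma wgt_cont (T : ℝ) : Continuous fun u => wgt T u := by
  unfold wgt
  fun_prop

lemma pos_aux (H : E →L[ℂ] E) (hH : IsSelfAdjoint H)
    (S : ℝ → E →L[ℂ] E) (hS : ∀ t : ℝ, S t = NormedSpace.exp ((Complex.I * t) • H))
    (f : E) (hφint : Integrable fun t : ℝ => (inner ℂ f (S t f) : ℂ)) :
    0 ≤ (∫ t : ℝ, (inner ℂ f (S t f) : ℂ)).re := by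
  set φ : ℝ → ℂ := fun t => (inner ℂ f (S t f) : ℂ) with hφ
  have hScont : Continuous S := by
    have : S = fun t : ℝ => NormedSpace.exp ((Complex.I * t) • H) := funext hS
    rw [this]; exact S_cont H
  have hcontf : Continuous fun t => S t f := hScont.clm_apply continuous_const
  have hφcont : Continuous φ := continuous_const.inner hcontf
  have hmul : ∀ s t : ℝ, S s * S t = S (s + t) := by
    intro s t; rw [hS, hS, hS]; exact S_add H s t
  have hstar : ∀ t : ℝ, star (S t) = S (-t) := by
    intro t; rw [hS, hS]; exact S_star H hH t
  have key : ∀ s t : ℝ, (inner ℂ (S s f) (S t f) : ℂ) = φ (t - s) := by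
    intro s t
    have h1 : (inner ℂ (S s f) (S t f) : ℂ)
        = inner ℂ f ((ContinuousLinearMap.adjoint (S s)) (S t f)) :=
      (ContinuousLinearMap.adjoint_inner_right _ _ _).symm
    rw [h1, ← ContinuousLinearMap.star_eq_adjoint, hstar]
    have h2 : (S (-s)) (S t f) = (S (-s) * S t) f := rfl
    rw [h2, hmul]
    have h3 : -s + t = t - s := by ring
    rw [h3]
  -- positivity of the Cesàro means
  have keyA : ∀ T : ℝ, 0 ≤ (∫ u : ℝ, wgt T u • φ u).re := by
    intro T
    rw [← fubini_step φ hφcont hφint T]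
    set v : E := ∫ t in Ioc (0:ℝ) T, S t f with hv
    have hIntS : IntegrableOn (fun t => S t f) (Ioc (0:ℝ) T) volume :=
      hcontf.integrableOn_Ioc
    have h2 : ∀ s : ℝ, (inner ℂ (S s f) v : ℂ) = ∫ t in Ioc (0:ℝ) T, φ (t - s) := by
      intro s
      rw [hv, ← integral_inner hIntS]
      exact setIntegral_congr_fun measurableSet_Ioc fun t _ => key s t
    have h1 : (inner ℂ v v : ℂ) = ∫ s in Ioc (0:ℝ) T, ∫ t in Ioc (0:ℝ) T, φ (t - s) := by
      calc (inner ℂ v v : ℂ) = starRingEnd ℂ (∫ t in Ioc (0:ℝ) T, (inner ℂ v (S t f) : ℂ)) := by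
            rw [integral_inner hIntS]
            exact (inner_conj_symm v v).symm
        _ = ∫ s in Ioc (0:ℝ) T, starRingEnd ℂ (inner ℂ v (S s f) : ℂ) := integral_conj.symm
        _ = ∫ s in Ioc (0:ℝ) T, (inner ℂ (S s f) v : ℂ) := by
            refine setIntegral_congr_fun measurableSet_Ioc fun s _ => ?_
            exact inner_conj_symm _ _
        _ = ∫ s in Ioc (0:ℝ) T, ∫ t in Ioc (0:ℝ) T, φ (t - s) :=
            setIntegral_congr_fun measurableSet_Ioc fun s _ => h2 s
    rw [← h1]
    simpa using inner_self_nonneg (𝕜 := ℂ) (x := v)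
  -- pass to the limit
  set B : ℕ → ℂ := fun n => ∫ u : ℝ, ((wgt ((n:ℝ) + 1) u) / ((n:ℝ) + 1)) • φ u with hB
  have hTpos : ∀ n : ℕ, (0:ℝ) < (n:ℝ) + 1 := fun n => by positivity
  have hBeq : ∀ n : ℕ, B n = (((n:ℝ) + 1)⁻¹) • ∫ u : ℝ, wgt ((n:ℝ) + 1) u • φ u := by
    intro n
    simp only [hB]
    rw [← integral_smul]
    congr 1; funext u
    rw [smul_smul, div_eq_inv_mul]
  have hBpos : ∀ n : ℕ, 0 ≤ (B n).re := by
    intro n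
    rw [hBeq n]
    have : ((((n:ℝ) + 1)⁻¹) • (∫ u : ℝ, wgt ((n:ℝ) + 1) u • φ u)).re
        = (((n:ℝ) + 1)⁻¹) * (∫ u : ℝ, wgt ((n:ℝ) + 1) u • φ u).re := by
      rw [Complex.real_smul, Complex.re_ofReal_mul]
    rw [this]
    exact mul_nonneg (by positivity) (keyA _)
  have htend : Tendsto B atTop (nhds (∫ u : ℝ, φ u)) := by
    refine tendsto_integral_of_dominated_convergence (fun u => ‖φ u‖) ?_ hφint.norm ?_ ?_
    · intro n
      exact (((wgt_cont _).div_const _).smul hφcont).aestronglyMeasurable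
    · intro n
      refine Filter.Eventually.of_forall fun u => ?_
      rw [norm_smul]
      have h0 : 0 ≤ wgt ((n:ℝ)+1) u := wgt_nonneg _ _
      have h1 : wgt ((n:ℝ)+1) u ≤ (n:ℝ) + 1 := wgt_le _ _ (le_of_lt (hTpos n))
      have : ‖wgt ((n:ℝ)+1) u / ((n:ℝ)+1)‖ ≤ 1 := by
        rw [Real.norm_eq_abs, abs_of_nonneg (by positivity)]
        rw [div_le_one (hTpos n)]
        exact h1
      calc ‖wgt ((n:ℝ)+1) u / ((n:ℝ)+1)‖ * ‖φ u‖ ≤ 1 * ‖φ u‖ :=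
            mul_le_mul_of_nonneg_right this (norm_nonneg _)
        _ = ‖φ u‖ := one_mul _
    · refine Filter.Eventually.of_forall fun u => ?_
      have hscal : Tendsto (fun n : ℕ => wgt ((n:ℝ)+1) u / ((n:ℝ)+1)) atTop (nhds 1) := by
        have hev : ∀ᶠ n : ℕ in atTop,
            wgt ((n:ℝ)+1) u / ((n:ℝ)+1) = 1 - |u| / ((n:ℝ)+1) := by
          filter_upwards [eventually_ge_atTop ⌈|u|⌉₊] with n hn
          have h1 : |u| ≤ (n:ℝ) + 1 := by
            calc |u| ≤ (⌈|u|⌉₊ : ℝ) := Nat.le_ceil _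
              _ ≤ (n:ℝ) := by exact_mod_cast hn
              _ ≤ (n:ℝ) + 1 := by linarith
          rw [wgt_eq _ _ h1, sub_div, div_self (ne_of_gt (hTpos n))]
        have hlim : Tendsto (fun n : ℕ => 1 - |u| / ((n:ℝ)+1)) atTop (nhds (1 - 0)) := by
          refine Tendsto.sub tendsto_const_nhds ?_
          exact Tendsto.div_atTop tendsto_const_nhds
            (tendsto_atTop_add_const_right _ _ tendsto_natCast_atTop_atTop)
        rw [sub_zero] at hlim
        exact hlim.congr' (hev.mono fun n h => h.symm)
      have := hscal.smul_const (φ u)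
      rwa [one_smul] at this
  have hre : Tendsto (fun n => (B n).re) atTop (nhds (∫ u : ℝ, φ u).re) :=
    (Complex.continuous_re.tendsto _).comp htend
  exact ge_of_tendsto' hre hBpos

end Stmt4Aux

open Stmt4Aux in
/-- The form `(f|g) := ∫ℝ ⟨f, S_t g⟩ dt` on a subspace `K` (with the integrability
condition) is a pre-inner ℂ product: conjugate-symmetric, linear in the second argument,
and `(f|f) ≥ 0`. -/
theorem stmt4 {E : Type*} [NormedAddCommGroup E] [InnerProductSpace ℂ E] [CompleteSpace E]
    (H : E →L[ℂ] E) (hH : IsSelfAdjoint H) (K : Submodule ℂ E)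
    (S : ℝ → E →L[ℂ] E) (hS : ∀ t : ℝ, S t = NormedSpace.exp ((Complex.I * t) • H))
    (hint : ∀ f ∈ K, ∀ g ∈ K, Integrable fun t : ℝ => (inner ℂ f (S t g) : ℂ)) :
    (∀ f ∈ K, ∀ g ∈ K,
        (∫ t : ℝ, (inner ℂ f (S t g) : ℂ)) = starRingEnd ℂ (∫ t : ℝ, (inner ℂ g (S t f) : ℂ))) ∧
    (∀ f ∈ K, ∀ g ∈ K, ∀ g' ∈ K,
        (∫ t : ℝ, (inner ℂ f (S t (g + g')) : ℂ))
          = (∫ t : ℝ, (inner ℂ f (S t g) : ℂ)) + ∫ t : ℝ, (inner ℂ f (S t g') : ℂ)) ∧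
    (∀ (c : ℂ), ∀ f ∈ K, ∀ g ∈ K,
        (∫ t : ℝ, (inner ℂ f (S t (c • g)) : ℂ)) = c * ∫ t : ℝ, (inner ℂ f (S t g) : ℂ)) ∧
    (∀ f ∈ K, 0 ≤ (∫ t : ℝ, (inner ℂ f (S t f) : ℂ)).re) := by
  have hstar : ∀ t : ℝ, star (S t) = S (-t) := by
    intro t; rw [hS, hS]; exact S_star H hH t
  refine ⟨?_, ?_, ?_, ?_⟩
  · -- conjugate symmetry
    intro f hf g hg
    rw [← integral_conj]
    have hpt : ∀ t : ℝ, starRingEnd ℂ (inner ℂ g (S t f) : ℂ) = (inner ℂ f (S (-t) g) : ℂ) := by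
      intro t
      rw [inner_conj_symm, ← ContinuousLinearMap.adjoint_inner_right,
        ← ContinuousLinearMap.star_eq_adjoint, hstar]
    calc (∫ t : ℝ, (inner ℂ f (S t g) : ℂ))
        = ∫ t : ℝ, (inner ℂ f (S (-t) g) : ℂ) :=
          (integral_neg_eq_self (fun t : ℝ => (inner ℂ f (S t g) : ℂ)) volume).symm
      _ = ∫ t : ℝ, starRingEnd ℂ (inner ℂ g (S t f) : ℂ) := by
          congr 1; funext t; rw [hpt t]
  · -- additivity
    intro f hf g hg g' hg'
    simp only [map_add, inner_add_right]
    exact integral_add (hint f hf g hg) (hint f hf g' hg')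
  · -- homogeneity
    intro c f hf g hg
    simp only [_root_.map_smul, inner_smul_right]
    exact integral_const_mul c _
  · -- positivity
    intro f hf
    exact pos_aux H hH S hS f (hint f hf f hf)
end

section
/- Let D, D' be bounded operators with D D' positive self-adjoint, and γ₀(E), γ₁(E) ∈ ℂ functions with positive real parts, and c(E) ≥ 0 an integrable non-negative weight. Assume for each E that 1 + γ₀(E)γ₁(E) D D' is invertible with inverse T(E). Then the operator Γ = ∫ dE γ₁(E)·D D'·T(E)·c(E) has non-negative real part. -/
open ContinuousLinearMap MeasureTheory

private lemma key_re {g₀ g₁ : ℂ} (h₀ : 0 < g₀.re) (h₁ : 0 < g₁.re)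
    {cc a b : ℝ} (hcc : 0 ≤ cc) (ha : 0 ≤ a) (hb : 0 ≤ b) :
    0 ≤ ((g₁ * (cc : ℂ)) * ((a : ℂ) + (starRingEnd ℂ) (g₀ * g₁) * (b : ℂ))).re := by
  have : ((g₁ * (cc : ℂ)) * ((a : ℂ) + (starRingEnd ℂ) (g₀ * g₁) * (b : ℂ))).re
      = cc * (a * g₁.re + b * (g₁.re ^ 2 + g₁.im ^ 2) * g₀.re) := by
    simp [Complex.mul_re, Complex.mul_im, Complex.add_re, Complex.add_im]
    ring
  rw [this]
  have h2 : 0 ≤ g₁.re ^ 2 + g₁.im ^ 2 := by positivity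
  have := mul_nonneg (mul_nonneg hb h2) h₀.le
  have := mul_nonneg ha h₁.le
  nlinarith

/-- If `D D'` is positive self-adjoint, `γ₀(E), γ₁(E)` have positive real parts,
`c(E) ≥ 0`, and `T(E) = (1 + γ₀(E)γ₁(E) D D')⁻¹`, then
`Γ = ∫ dE γ₁(E) D D' T(E) c(E)` has non-negative real part. -/
theorem stmt9 {𝓗 : Type*} [NormedAddCommGroup 𝓗] [InnerProductSpace ℂ 𝓗]
    [FiniteDimensional ℂ 𝓗] (D D' : 𝓗 →L[ℂ] 𝓗) (hpos : (D * D').IsPositive)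
    (γ₀ γ₁ : ℝ → ℂ) (hγ₀ : ∀ x : ℝ, 0 < (γ₀ x).re) (hγ₁ : ∀ x : ℝ, 0 < (γ₁ x).re)
    (c : ℝ → ℝ) (hc : ∀ x : ℝ, 0 ≤ c x)
    (T : ℝ → 𝓗 →L[ℂ] 𝓗)
    (hT : ∀ x : ℝ, (1 + (γ₀ x * γ₁ x) • (D * D')) * T x = 1
        ∧ T x * (1 + (γ₀ x * γ₁ x) • (D * D')) = 1)
    (hi : Integrable fun x : ℝ => (γ₁ x * (c x : ℂ)) • (D * D' * T x)) :
    ((2 : ℂ)⁻¹ • ((∫ x : ℝ, (γ₁ x * (c x : ℂ)) • (D * D' * T x))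
        + adjoint (∫ x : ℝ, (γ₁ x * (c x : ℂ)) • (D * D' * T x)))).IsPositive := by
  set A := D * D' with hA
  set Γ := ∫ x : ℝ, (γ₁ x * (c x : ℂ)) • (A * T x) with hΓ
  -- key pointwise estimate
  have key : ∀ (x : ℝ) (v : 𝓗),
      0 ≤ (inner ℂ v (((γ₁ x * (c x : ℂ)) • (A * T x)) v) : ℂ).re := by
    intro x v
    set w := T x v with hw
    have hv : v = w + (γ₀ x * γ₁ x) • A w := by
      have := congrArg (fun (S : 𝓗 →L[ℂ] 𝓗) => S v) (hT x).1
      simpa [ContinuousLinearMap.mul_apply, ContinuousLinearMap.add_apply,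
        ContinuousLinearMap.smul_apply] using this.symm
    have happ : ((γ₁ x * (c x : ℂ)) • (A * T x)) v = (γ₁ x * (c x : ℂ)) • (A w) := by
      simp [ContinuousLinearMap.smul_apply, ContinuousLinearMap.mul_apply, hw]
    rw [happ, inner_smul_right]
    -- ⟪w, A w⟫ is real and nonneg
    have hsym := hpos.1
    have h1 : (starRingEnd ℂ) (inner ℂ ((A : 𝓗 →L[ℂ] 𝓗) w) w : ℂ) = inner ℂ (A w) w :=
      (LinearMap.isSymmetric_iff_inner_map_self_real _).mp hsym w
    have h2 : (starRingEnd ℂ) (inner ℂ w ((A : 𝓗 →L[ℂ] 𝓗) w) : ℂ) = inner ℂ w (A w) := by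
      rw [inner_conj_symm, ← h1, inner_conj_symm]
    have hreal : (inner ℂ w ((A : 𝓗 →L[ℂ] 𝓗) w) : ℂ) = ((inner ℂ w (A w) : ℂ).re : ℂ) :=
      ((Complex.conj_eq_iff_re).mp h2).symm
    have ha : 0 ≤ (inner ℂ w ((A : 𝓗 →L[ℂ] 𝓗) w) : ℂ).re := hpos.re_inner_nonneg_right w
    have hb : 0 ≤ (inner ℂ ((A : 𝓗 →L[ℂ] 𝓗) w) (A w) : ℂ).re := inner_self_nonneg (𝕜 := ℂ)
    have hinner : (inner ℂ v ((A : 𝓗 →L[ℂ] 𝓗) w) : ℂ)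
        = ((inner ℂ w (A w) : ℂ).re : ℂ)
          + (starRingEnd ℂ) (γ₀ x * γ₁ x) * (((inner ℂ ((A : 𝓗 →L[ℂ] 𝓗) w) (A w) : ℂ).re : ℝ) : ℂ) := by
      conv_lhs => rw [hv]
      rw [inner_add_left, inner_smul_left, ← hreal]
      congr 1
      congr 1
      exact (inner_self_ofReal_re (𝕜 := ℂ) (A w)).symm
    rw [hinner]
    exact key_re (hγ₀ x) (hγ₁ x) (hc x) ha hb
  constructor
  · rw [← isSelfAdjoint_iff_isSymmetric]
    unfold IsSelfAdjoint
    rw [star_smul, star_add, star_eq_adjoint, star_eq_adjoint,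
      adjoint_adjoint, add_comm]
    congr 1
    simp [Complex.star_def, map_inv₀]
  · intro v
    have hΓv : Γ v = ∫ x : ℝ, ((γ₁ x * (c x : ℂ)) • (A * T x)) v := integral_apply hi v
    have hint : Integrable (fun x : ℝ => ((γ₁ x * (c x : ℂ)) • (A * T x)) v) :=
      hi.apply_continuousLinearMap v
    have hmain : 0 ≤ (inner ℂ v (Γ v) : ℂ).re := by
      rw [hΓv, ← integral_inner hint v]
      have hre := integral_re ((innerSL ℂ v).integrable_comp hint)
      simp only [innerSL_apply_apply, RCLike.re_to_complex] at hre
      rw [← hre]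
      exact integral_nonneg fun x => key x v
    have hp : 0 ≤ (inner ℂ (Γ v) v : ℂ).re := by
      have h : (inner ℂ (Γ v) v : ℂ).re = (inner ℂ v (Γ v) : ℂ).re := by
        rw [← inner_conj_symm v (Γ v), Complex.conj_re]
      rw [h]; exact hmain
    rw [reApplyInnerSelf_apply]
    have hsmul : ((2 : ℂ)⁻¹ • (Γ + adjoint Γ)) v = (2 : ℂ)⁻¹ • (Γ v + (adjoint Γ) v) := by
      simp
    rw [hsmul, inner_smul_left, inner_add_left, adjoint_inner_left,
      ← inner_conj_symm v (Γ v)]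
    have hcalc : ∀ p : ℂ, ((starRingEnd ℂ) (2 : ℂ)⁻¹ * (p + (starRingEnd ℂ) p)).re
        = p.re := by
      intro p
      simp [Complex.mul_re, Complex.add_re, Complex.add_im]
      ring
    simp only [RCLike.re_to_complex]
    rw [hcalc]
    exact hp
end
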